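/- Let m, n ≥ 1, γ ≥ 0 and τ > 0. Let A be a random matrix over F₂^{m×n} with min-entropy H_∞(A) ≥ (1−γ)·m·n, and let A₀ be a matrix in the support of A that is not τ-rare. Then there exists a set S ⊆ {1, …, m} with |S| ≤ √(τ+γ)·m such that q_i(A₀) ≥ (1−√(τ+γ))·n for every i ∉ S. -/

import Mathlib

open Finset

open Classical in
/-- Probability of an event for a random matrix over `F₂` with mass function `μ`. -/
noncomputable def prEvt {m n : ℕ} (μ : Matrix (Fin m) (Fin n) (ZMod 2) → ℝ)
    (E : Matrix (Fin m) (Fin n) (ZMod 2) → Prop) : ℝ :=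
  ∑ A, if E A then μ A else 0

/-- `rowsAgree i A B` says that the first `i` rows of `A` and `B` coincide. -/
def rowsAgree {m n : ℕ} (i : ℕ) (A B : Matrix (Fin m) (Fin n) (ZMod 2)) : Prop :=
  ∀ j : Fin m, (j : ℕ) < i → A j = B j

/-- `pIdx μ i A₀` is the conditional probability that row `i` of a `μ`-random matrix equals
row `i` of `A₀`, given that the previous rows agree with those of `A₀`. -/
noncomputable def pIdx {m n : ℕ} (μ : Matrix (Fin m) (Fin n) (ZMod 2) → ℝ)
    (i : Fin m) (A₀ : Matrix (Fin m) (Fin n) (ZMod 2)) : ℝ :=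
  prEvt μ (fun B => B i = A₀ i ∧ rowsAgree (i : ℕ) B A₀)
    / prEvt μ (fun B => rowsAgree (i : ℕ) B A₀)

/-- `qIdx μ i A₀ = -log₂ (pIdx μ i A₀)`. -/
noncomputable def qIdx {m n : ℕ} (μ : Matrix (Fin m) (Fin n) (ZMod 2) → ℝ)
    (i : Fin m) (A₀ : Matrix (Fin m) (Fin n) (ZMod 2)) : ℝ :=
  -Real.logb 2 (pIdx μ i A₀)

/-- `A₀` is `τ`-rare if some conditional row probability is below `2 ^ (-n (1 + τ))`. -/
def tauRare {m n : ℕ} (μ : Matrix (Fin m) (Fin n) (ZMod 2) → ℝ) (τ : ℝ)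
    (A₀ : Matrix (Fin m) (Fin n) (ZMod 2)) : Prop :=
  ∃ i : Fin m, pIdx μ i A₀ < (2 : ℝ) ^ (-((n : ℝ) * (1 + τ)))

/-!
Write `Qᵢ` (`prefixProb`) for the probability that the first `i` rows of `A` agree with those
of `A₀`. Then `pᵢ = Qᵢ₊₁ / Qᵢ`, so the surprises `qᵢ = log₂ Qᵢ - log₂ Qᵢ₊₁` telescope to
`-log₂ Pr[A = A₀] ≥ (1 - γ) m n`. Not being `τ`-rare caps each `qᵢ` at `(1 + τ) n`, so the deficits
`(1 + τ) n - qᵢ` are nonnegative with total at most `(τ + γ) m n`. A row with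
`qᵢ < (1 - √(τ + γ)) n` has deficit above `√(τ + γ) n`, and Markov's inequality bounds their number.
-/

section Markov

variable {ι : Type*} [Fintype ι]

theorem card_filter_mul_lt_sum_sub (x : ι → ℝ) {u ε : ℝ} (hx : ∀ i, x i ≤ u)
    (hne : (univ.filter fun i => x i < u - ε).Nonempty) :
    #(univ.filter fun i => x i < u - ε) * ε < ∑ i, (u - x i) := by
  calc #(univ.filter fun i => x i < u - ε) * ε
      = ∑ _i ∈ univ.filter fun i => x i < u - ε, ε := by rw [sum_const, nsmul_eq_mul]
    _ < ∑ i ∈ univ.filter fun i => x i < u - ε, (u - x i) :=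
        sum_lt_sum_of_nonempty hne fun i hi => by linarith [(mem_filter.mp hi).2]
    _ ≤ ∑ i, (u - x i) :=
        sum_le_sum_of_subset_of_nonneg (filter_subset _ _) fun i _ _ => by linarith [hx i]

theorem card_filter_lt_le_sqrt_mul (x : ι → ℝ) {n τ γ : ℝ} (hn : 0 ≤ n) (hτ : 0 ≤ τ)
    (hτγ : 0 ≤ τ + γ) (hx : ∀ i, x i ≤ (1 + τ) * n)
    (hsum : (1 - γ) * Fintype.card ι * n ≤ ∑ i, x i) :
    (#(univ.filter fun i => x i < (1 - √(τ + γ)) * n) : ℝ) ≤ √(τ + γ) * Fintype.card ι := by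
  set s := √(τ + γ)
  have hs : 0 ≤ s := Real.sqrt_nonneg _
  have hsq : s ^ 2 = τ + γ := Real.sq_sqrt hτγ
  set k : ℝ := (#(univ.filter fun i => x i < (1 - s) * n) : ℝ)
  by_contra! hk
  have hne : (univ.filter fun i => x i < (1 - s) * n).Nonempty := by
    rw [← card_pos, ← Nat.cast_pos (α := ℝ)]
    exact lt_of_le_of_lt (by positivity) hk
  have hthreshold : (1 + τ) * n - (τ + s) * n = (1 - s) * n := by ring
  have hmarkov := card_filter_mul_lt_sum_sub x (ε := (τ + s) * n) hx
  rw [hthreshold] at hmarkov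
  specialize hmarkov hne
  have hdeficit : ∑ i, ((1 + τ) * n - x i) ≤ Fintype.card ι * (s ^ 2 * n) := by
    rw [sum_sub_distrib, sum_const, nsmul_eq_mul, hsq, card_univ]
    linarith
  have hk' : s * Fintype.card ι * s ≤ k * (τ + s) := by nlinarith
  nlinarith [mul_le_mul_of_nonneg_right hk' hn]

end Markov

namespace Real

theorem le_neg_logb_of_le_rpow {b x a : ℝ} (hb : 1 < b) (hx : 0 < x) (h : x ≤ b ^ (-a)) :
    a ≤ -logb b x := by
  rw [le_neg, logb_le_iff_le_rpow hb hx]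
  exact h

theorem neg_logb_le_of_rpow_le {b x a : ℝ} (hb : 1 < b) (h : b ^ (-a) ≤ x) :
    -logb b x ≤ a := by
  rw [neg_le, le_logb_iff_rpow_le hb ((rpow_pos_of_pos (by linarith) _).trans_le h)]
  exact h

end Real

section Prefix

variable {m n : ℕ} (μ : Matrix (Fin m) (Fin n) (ZMod 2) → ℝ)
  (A₀ : Matrix (Fin m) (Fin n) (ZMod 2))

noncomputable def prefixProb (i : ℕ) : ℝ :=
  prEvt μ fun B => rowsAgree i B A₀

open Classical in
theorem le_prEvt (hμ0 : ∀ A, 0 ≤ μ A) {E : Matrix (Fin m) (Fin n) (ZMod 2) → Prop}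
    (hE : E A₀) : μ A₀ ≤ prEvt μ E := by
  have := single_le_sum (f := fun A => if E A then μ A else 0)
    (fun A _ => by split_ifs <;> simp [hμ0 A]) (mem_univ A₀)
  simpa [prEvt, hE] using this

theorem prefixProb_pos (hμ0 : ∀ A, 0 ≤ μ A) (hsupp : 0 < μ A₀) (i : ℕ) :
    0 < prefixProb μ A₀ i :=
  hsupp.trans_le (le_prEvt μ A₀ hμ0 fun _ _ => rfl)

theorem prefixProb_zero (hμ1 : ∑ A, μ A = 1) : prefixProb μ A₀ 0 = 1 := by
  simp [prefixProb, prEvt, rowsAgree, hμ1]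

theorem prefixProb_card_rows : prefixProb μ A₀ m = μ A₀ := by
  have hagree : ∀ B, rowsAgree m B A₀ ↔ B = A₀ := fun B =>
    ⟨fun h => funext fun j => h j j.isLt, fun h j _ => h ▸ rfl⟩
  simp [prefixProb, prEvt, hagree]

theorem pIdx_eq_prefixProb_div (i : Fin m) :
    pIdx μ i A₀ = prefixProb μ A₀ (i + 1) / prefixProb μ A₀ i := by
  have hagree : ∀ B, (B i = A₀ i ∧ rowsAgree i B A₀) ↔ rowsAgree (i + 1) B A₀ := by
    refine fun B => ⟨fun ⟨hi, hlt⟩ j hj => ?_, fun h => ⟨h i i.val.lt_succ_self,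
      fun j hj => h j (Nat.lt_succ_of_lt hj)⟩⟩
    rcases Nat.lt_succ_iff_lt_or_eq.mp hj with hj | hj
    · exact hlt j hj
    · exact Fin.ext hj ▸ hi
  simp only [pIdx, prefixProb, hagree]

theorem qIdx_eq_logb_sub (hμ0 : ∀ A, 0 ≤ μ A) (hsupp : 0 < μ A₀) (i : Fin m) :
    qIdx μ i A₀ = Real.logb 2 (prefixProb μ A₀ i) - Real.logb 2 (prefixProb μ A₀ (i + 1)) := by
  rw [qIdx, pIdx_eq_prefixProb_div, Real.logb_div (prefixProb_pos μ A₀ hμ0 hsupp _).ne'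
    (prefixProb_pos μ A₀ hμ0 hsupp _).ne']
  ring

theorem sum_qIdx (hμ0 : ∀ A, 0 ≤ μ A) (hμ1 : ∑ A, μ A = 1) (hsupp : 0 < μ A₀) :
    ∑ i, qIdx μ i A₀ = -Real.logb 2 (μ A₀) := by
  simp only [qIdx_eq_logb_sub μ A₀ hμ0 hsupp]
  rw [Fin.sum_univ_eq_sum_range (fun i => Real.logb 2 (prefixProb μ A₀ i) -
    Real.logb 2 (prefixProb μ A₀ (i + 1))), sum_range_sub', prefixProb_zero μ A₀ hμ1,
    prefixProb_card_rows]
  simp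

theorem qIdx_le_of_not_tauRare {τ : ℝ} (hrare : ¬ tauRare μ τ A₀) (i : Fin m) :
    qIdx μ i A₀ ≤ (1 + τ) * n := by
  simp only [tauRare, not_exists, not_lt] at hrare
  exact (Real.neg_logb_le_of_rpow_le one_lt_two (hrare i)).trans_eq (mul_comm _ _)

end Prefix

theorem exists_bad_row_set_general (m n : ℕ)
    (μ : Matrix (Fin m) (Fin n) (ZMod 2) → ℝ)
    (hμ0 : ∀ A, 0 ≤ μ A) (hμ1 : ∑ A, μ A = 1)
    (γ τ : ℝ) (hγ : 0 ≤ γ) (hτ : 0 < τ)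
    (hminent : ∀ A₀, μ A₀ ≤ (2 : ℝ) ^ (-((1 - γ) * (m : ℝ) * (n : ℝ))))
    (A₀ : Matrix (Fin m) (Fin n) (ZMod 2)) (hsupp : 0 < μ A₀)
    (hrare : ¬ tauRare μ τ A₀) :
    ∃ S : Finset (Fin m), (S.card : ℝ) ≤ Real.sqrt (τ + γ) * (m : ℝ) ∧
      ∀ i : Fin m, i ∉ S → (1 - Real.sqrt (τ + γ)) * (n : ℝ) ≤ qIdx μ i A₀ := by
  have hsum : (1 - γ) * Fintype.card (Fin m) * n ≤ ∑ i, qIdx μ i A₀ := by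
    rw [sum_qIdx μ A₀ hμ0 hμ1 hsupp, Fintype.card_fin]
    exact Real.le_neg_logb_of_le_rpow one_lt_two hsupp (hminent A₀)
  refine ⟨univ.filter fun i => qIdx μ i A₀ < (1 - √(τ + γ)) * n, ?_, fun i hi => ?_⟩
  · simpa using card_filter_lt_le_sqrt_mul (fun i => qIdx μ i A₀) n.cast_nonneg hτ.le
      (by linarith) (qIdx_le_of_not_tauRare μ A₀ hrare) hsum
  · simpa using hi

/-- If `A` has min-entropy at least `(1-γ)mn` and `A₀` is a non-`τ`-rare matrix in the support,
then at most a `√(τ+γ)` fraction of the rows have small conditional surprise `qᵢ`. -/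
theorem exists_bad_row_set (m n : ℕ) (hm : 1 ≤ m) (hn : 1 ≤ n)
    (μ : Matrix (Fin m) (Fin n) (ZMod 2) → ℝ)
    (hμ0 : ∀ A, 0 ≤ μ A) (hμ1 : ∑ A, μ A = 1)
    (γ τ : ℝ) (hγ : 0 ≤ γ) (hτ : 0 < τ)
    (hminent : ∀ A₀, μ A₀ ≤ (2 : ℝ) ^ (-((1 - γ) * (m : ℝ) * (n : ℝ))))
    (A₀ : Matrix (Fin m) (Fin n) (ZMod 2)) (hsupp : 0 < μ A₀)
    (hrare : ¬ tauRare μ τ A₀) :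
    ∃ S : Finset (Fin m), (S.card : ℝ) ≤ Real.sqrt (τ + γ) * (m : ℝ) ∧
      ∀ i : Fin m, i ∉ S → (1 - Real.sqrt (τ + γ)) * (n : ℝ) ≤ qIdx μ i A₀ :=
  exists_bad_row_set_general m n μ hμ0 hμ1 γ τ hγ hτ hminent A₀ hsupp hrare
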